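/- Let z = \pi R / L. Then \pi (D + \hat V_{1,0}) = D\pi + R^2 \big( (\pi/2)(\ell/R) [J_1(z)H_0(z) - J_0(z)H_1(z)] - J_2(z) \big); in particular, the instability threshold condition D + \hat V_{1,0} = 0 holds if and only if D\pi + R^2( (\pi/2)(\ell/R)[J_1(z)H_0(z) - J_0(z)H_1(z)] - J_2(z) ) = 0. -/

import Mathlib

/-!
Since `R ≤ L`, the potential vanishes outside the square, so `V̂₁₀` is an integral over the whole
plane; in polar coordinates it is `(2L)⁻² ∫₀^R ∫_{-π}^{π} r V(r) cos((π/L) r cos θ) dθ dr`.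
Expanding the cosine, each term is a polynomial moment of `V` times `∫ cos^{2m} θ dθ`, and
resumming gives `π V̂₁₀ = -R² J₂(z) + (ℓR/z) T(z)` with `T(x) = ∫₀ˣ t J₁(t) dt`. Finally
`x (J₁ H₀ - J₀ H₁) = (2/π) T(x)`: both sides vanish at `0` and, by `(x J₁)' = x J₀`, `J₀' = -J₁`,
`(x H₁)' = x H₀` and `H₀' = 2/π - H₁`, both have derivative `(2/π) x J₁(x)`.
-/

open Real MeasureTheory

/-- The 2D interaction potential: `V x = (|x| - ℓ)^2 - (R - ℓ)^2` for `|x| < R`, `0` otherwise,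
where `|x| = √(x₁² + x₂²)` is the Euclidean norm. -/
noncomputable def potV2 (R ℓ : ℝ) (x : ℝ × ℝ) : ℝ :=
  if Real.sqrt (x.1 ^ 2 + x.2 ^ 2) < R then
    (Real.sqrt (x.1 ^ 2 + x.2 ^ 2) - ℓ) ^ 2 - (R - ℓ) ^ 2
  else 0

/-- The `(k₁, k₂)`-th Fourier coefficient of `V` on the periodic square `[-L, L]²`.
It is a real number since `V` is real and radially symmetric. -/
noncomputable def Vhat2C (L R ℓ : ℝ) (k₁ k₂ : ℤ) : ℂ :=
  (1 / (2 * L)) ^ 2 *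
    ∫ x in Set.Icc (-L) L ×ˢ Set.Icc (-L) L, (potV2 R ℓ x : ℂ) *
      Complex.exp (-(Complex.I * (π : ℂ) * ((k₁ : ℂ) * (x.1 : ℂ) + (k₂ : ℂ) * (x.2 : ℂ)) /
        (L : ℂ)))

/-- The Bessel function of the first kind of order `i`. -/
noncomputable def besselJ (i : ℕ) (x : ℝ) : ℝ :=
  ∑' m : ℕ, ((-1 : ℝ) ^ m / (m.factorial * Real.Gamma (m + 1 + i))) * (x / 2) ^ (2 * m + i)

/-- The Struve function of order `i`. -/
noncomputable def struveH (i : ℕ) (x : ℝ) : ℝ :=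
  ∑' m : ℕ, ((-1 : ℝ) ^ m / (Real.Gamma (m + 3 / 2) * Real.Gamma (m + i + 3 / 2))) *
    (x / 2) ^ (2 * m + i + 1)

open scoped Nat

section EntireSeries

/- Below, `hc : ∀ R ≥ 0, Summable fun m => |c m| * R ^ m` says that `∑ c m tᵐ` is entire, and
`hq : ∀ m, q m ≤ 2 * m + k` that `∑ c m y ^ q m` is, up to a bounded power of `y`, a series in `y²`;
such series converge everywhere and can be differentiated termwise. -/

variable {c : ℕ → ℝ} {q : ℕ → ℕ} {k : ℕ}

theorem summable_abs_mul_pow_of_abs_le_div_factorial {C : ℝ} (hc : ∀ m, |c m| ≤ C / m !)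
    (R : ℝ) (hR : 0 ≤ R) : Summable fun m => |c m| * R ^ m := by
  refine .of_nonneg_of_le (fun m => by positivity) (fun m => ?_)
    ((Real.summable_pow_div_factorial R).mul_left C)
  calc |c m| * R ^ m ≤ C / m ! * R ^ m := by gcongr; exact hc m
    _ = C * (R ^ m / m !) := by ring

theorem abs_mul_pow_le (hq : ∀ m, q m ≤ 2 * m + k) {y M : ℝ} (hM : 1 ≤ M) (hy : |y| ≤ M)
    (m : ℕ) : |c m * y ^ q m| ≤ M ^ k * (|c m| * (M ^ 2) ^ m) := by
  calc |c m * y ^ q m| = |c m| * |y| ^ q m := by rw [abs_mul, abs_pow]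
    _ ≤ |c m| * M ^ (2 * m + k) := by
        gcongr
        exact (pow_le_pow_left₀ (abs_nonneg y) hy _).trans (pow_le_pow_right₀ hM (hq m))
    _ = M ^ k * (|c m| * (M ^ 2) ^ m) := by ring

theorem summable_mul_pow (hc : ∀ R : ℝ, 0 ≤ R → Summable fun m => |c m| * R ^ m)
    (hq : ∀ m, q m ≤ 2 * m + k) (y : ℝ) : Summable fun m => c m * y ^ q m :=
  .of_norm_bounded (((hc _ (by positivity)).mul_left ((max 1 |y|) ^ k)))
    (abs_mul_pow_le hq (le_max_left _ _) (le_max_right _ _))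

theorem cast_le_mul_two_pow (hq : ∀ m, q m ≤ 2 * m + k) (m : ℕ) :
    (q m : ℝ) ≤ (k + 2) * 2 ^ m := by
  have h : q m ≤ (k + 2) * 2 ^ m := by
    nlinarith [hq m, Nat.lt_two_pow_self (n := m), Nat.one_le_two_pow (n := m)]
  exact_mod_cast h

theorem summable_abs_mul_cast_mul_pow
    (hc : ∀ R : ℝ, 0 ≤ R → Summable fun m => |c m| * R ^ m) (hq : ∀ m, q m ≤ 2 * m + k)
    (R : ℝ) (hR : 0 ≤ R) :
    Summable fun m => |c m * q m| * R ^ m := by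
  refine .of_nonneg_of_le (fun m => by positivity) (fun m => ?_)
    ((hc (2 * R) (by positivity)).mul_left ((k : ℝ) + 2))
  calc |c m * q m| * R ^ m = |c m| * q m * R ^ m := by
        rw [abs_mul, Nat.abs_cast]
    _ ≤ |c m| * ((k + 2) * 2 ^ m) * R ^ m := by
        gcongr
        exact cast_le_mul_two_pow hq m
    _ = (k + 2) * (|c m| * (2 * R) ^ m) := by ring

theorem hasDerivAt_tsum_mul_pow (hc : ∀ R : ℝ, 0 ≤ R → Summable fun m => |c m| * R ^ m)
    (hq : ∀ m, q m ≤ 2 * m + k) (x : ℝ) :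
    HasDerivAt (fun y => ∑' m, c m * y ^ q m) (∑' m, c m * q m * x ^ (q m - 1)) x := by
  obtain ⟨M, hM, hxM⟩ : ∃ M : ℝ, 1 ≤ M ∧ x ∈ Set.Ioo (-M) M :=
    ⟨|x| + 1, by simp, abs_lt.mp (by simp)⟩
  have hq' : ∀ m, q m - 1 ≤ 2 * m + k := fun m => (Nat.sub_le _ _).trans (hq m)
  refine hasDerivAt_tsum_of_isPreconnected (g := fun m y => c m * y ^ q m)
    (g' := fun m y => c m * q m * y ^ (q m - 1))
    (u := fun m => M ^ k * (|c m * q m| * (M ^ 2) ^ m))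
    ((summable_abs_mul_cast_mul_pow hc hq _ (by positivity)).mul_left (M ^ k))
    isOpen_Ioo isPreconnected_Ioo (fun m y _ => ?_) (fun m y hy => ?_) hxM
    (summable_mul_pow hc hq x) hxM
  · exact ((hasDerivAt_pow (q m) y).const_mul (c m)).congr_deriv (mul_assoc _ _ _).symm
  · exact abs_mul_pow_le (c := fun m => c m * q m) hq' hM (abs_lt.mpr hy).le m

theorem hasDerivAt_tsum_mul_half_pow (hc : ∀ R : ℝ, 0 ≤ R → Summable fun m => |c m| * R ^ m)
    (hq : ∀ m, q m ≤ 2 * m + k) (x : ℝ) :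
    HasDerivAt (fun y => ∑' m, c m * (y / 2) ^ q m)
      (∑' m, c m * q m / 2 * (x / 2) ^ (q m - 1)) x := by
  have h := (hasDerivAt_tsum_mul_pow hc hq (x / 2)).comp x ((hasDerivAt_id' x).div_const 2)
  refine h.congr_deriv ?_
  rw [← tsum_mul_right]
  exact tsum_congr fun m => by ring

end EntireSeries

noncomputable def besselJCoeff (i m : ℕ) : ℝ := (-1) ^ m / (m ! * (m + i) !)

noncomputable def struveHCoeff (i m : ℕ) : ℝ :=
  (-1) ^ m / (Real.Gamma (m + 3 / 2) * Real.Gamma (m + i + 3 / 2))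

theorem besselJ_eq_tsum (i : ℕ) (x : ℝ) :
    besselJ i x = ∑' m, besselJCoeff i m * (x / 2) ^ (2 * m + i) := by
  refine tsum_congr fun m => ?_
  rw [besselJCoeff, ← Nat.cast_add_one, Nat.cast_add_one, add_right_comm, ← Nat.cast_add,
    Real.Gamma_nat_eq_factorial]

theorem struveH_eq_tsum (i : ℕ) (x : ℝ) :
    struveH i x = ∑' m, struveHCoeff i m * (x / 2) ^ (2 * m + i + 1) := rfl

theorem abs_besselJCoeff_le (i m : ℕ) : |besselJCoeff i m| ≤ 1 / m ! := by
  rw [besselJCoeff, abs_div, abs_pow, abs_neg, abs_one, one_pow, abs_of_pos (by positivity)]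
  gcongr
  exact le_mul_of_one_le_right (by positivity) (by exact_mod_cast (m + i).factorial_pos)

theorem Gamma_add_three_halves_add_one {s : ℝ} (hs : 0 ≤ s) :
    Real.Gamma (s + 1 + 3 / 2) = (s + 3 / 2) * Real.Gamma (s + 3 / 2) := by
  rw [add_right_comm, Real.Gamma_add_one (by positivity)]

theorem Gamma_three_halves : Real.Gamma (3 / 2) = √π / 2 := by
  rw [show (3 / 2 : ℝ) = 1 / 2 + 1 by norm_num, Real.Gamma_add_one (by norm_num),
    Real.Gamma_one_half_eq]
  ring

theorem factorial_le_two_mul_Gamma_add_three_halves (m : ℕ) :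
    (m ! : ℝ) ≤ 2 * Real.Gamma (m + 3 / 2) := by
  induction m with
  | zero =>
    have hπ : (1 : ℝ) ≤ √π := Real.one_le_sqrt.mpr (by linarith [Real.pi_gt_three])
    rw [Nat.cast_zero, zero_add, Gamma_three_halves]
    norm_num
    linarith
  | succ n ih =>
    rw [Nat.factorial_succ, Nat.cast_mul, Nat.cast_succ,
      Gamma_add_three_halves_add_one (Nat.cast_nonneg n)]
    nlinarith [Real.Gamma_pos_of_pos (show (0 : ℝ) < n + 3 / 2 by positivity)]

theorem abs_struveHCoeff_le (i m : ℕ) : |struveHCoeff i m| ≤ 4 / m ! := by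
  have hm := factorial_le_two_mul_Gamma_add_three_halves m
  have hmi := factorial_le_two_mul_Gamma_add_three_halves (m + i)
  have hone : (1 : ℝ) ≤ (m + i) ! := by exact_mod_cast (m + i).factorial_pos
  push_cast at hmi
  have hpos : (0 : ℝ) < m ! := by positivity
  rw [struveHCoeff, abs_div, abs_pow, abs_neg, abs_one, one_pow, abs_of_pos (by positivity),
    div_le_div_iff₀ (by positivity) hpos]
  nlinarith

theorem summable_abs_besselJCoeff_mul_pow (i : ℕ) (R : ℝ) (hR : 0 ≤ R) :
    Summable fun m => |besselJCoeff i m| * R ^ m :=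
  summable_abs_mul_pow_of_abs_le_div_factorial (abs_besselJCoeff_le i) R hR

theorem summable_abs_struveHCoeff_mul_pow (i : ℕ) (R : ℝ) (hR : 0 ≤ R) :
    Summable fun m => |struveHCoeff i m| * R ^ m :=
  summable_abs_mul_pow_of_abs_le_div_factorial (abs_struveHCoeff_le i) R hR

theorem besselJCoeff_succ_mul (i m : ℕ) :
    besselJCoeff i (m + 1) * (m + 1) = -besselJCoeff (i + 1) m := by
  rw [besselJCoeff, besselJCoeff, show m + 1 + i = m + (i + 1) by ring, ← add_assoc,
    Nat.factorial_succ, Nat.factorial_succ]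
  push_cast
  field_simp
  ring

theorem besselJCoeff_succ_order_mul (i m : ℕ) :
    besselJCoeff (i + 1) m * (m + i + 1) = besselJCoeff i m := by
  simp only [besselJCoeff, ← add_assoc, Nat.factorial_succ]
  push_cast
  field_simp

theorem struveHCoeff_succ_mul (i m : ℕ) :
    struveHCoeff i (m + 1) * (m + 3 / 2) = -struveHCoeff (i + 1) m := by
  have h1 : Real.Gamma (((m + 1 : ℕ) : ℝ) + 3 / 2) = (m + 3 / 2) * Real.Gamma (m + 3 / 2) := by
    rw [Nat.cast_succ]
    exact Gamma_add_three_halves_add_one (by positivity)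
  have h2 : Real.Gamma (((m + 1 : ℕ) : ℝ) + i + 3 / 2) =
      Real.Gamma (m + ((i + 1 : ℕ) : ℝ) + 3 / 2) := by
    push_cast
    ring_nf
  have g1 := Real.Gamma_pos_of_pos (show (0 : ℝ) < m + 3 / 2 by positivity)
  rw [struveHCoeff, struveHCoeff, h1, h2]
  field_simp
  ring

theorem struveHCoeff_succ_order_mul (i m : ℕ) :
    struveHCoeff (i + 1) m * (m + i + 3 / 2) = struveHCoeff i m := by
  have h2 : Real.Gamma (m + ((i + 1 : ℕ) : ℝ) + 3 / 2) =
      (m + i + 3 / 2) * Real.Gamma (m + i + 3 / 2) := by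
    rw [show (m : ℝ) + ((i + 1 : ℕ) : ℝ) + 3 / 2 = (m + i) + 1 + 3 / 2 by push_cast; ring]
    exact Gamma_add_three_halves_add_one (by positivity)
  have g1 := Real.Gamma_pos_of_pos (show (0 : ℝ) < m + 3 / 2 by positivity)
  have g2 := Real.Gamma_pos_of_pos (show (0 : ℝ) < m + i + 3 / 2 by positivity)
  rw [struveHCoeff, struveHCoeff, h2]
  field_simp

theorem hasDerivAt_besselJ_zero (x : ℝ) : HasDerivAt (besselJ 0) (-besselJ 1 x) x := by
  have h := hasDerivAt_tsum_mul_half_pow (summable_abs_besselJCoeff_mul_pow 0)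
    (q := fun m => 2 * m + 0) (fun m => le_rfl) x
  rw [← funext (besselJ_eq_tsum 0)] at h
  refine h.congr_deriv ?_
  have hshift : ∀ m : ℕ, besselJCoeff 0 (m + 1) * ((2 * (m + 1) + 0 : ℕ) : ℝ) / 2 *
      (x / 2) ^ (2 * (m + 1) + 0 - 1) = -(besselJCoeff 1 m * (x / 2) ^ (2 * m + 1)) := by
    intro m
    have h := besselJCoeff_succ_mul 0 m
    rw [show 2 * (m + 1) + 0 - 1 = 2 * m + 1 by omega]
    push_cast at h ⊢
    linear_combination (x / 2) ^ (2 * m + 1) * h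
  rw [tsum_eq_zero_add' ?_]
  · simp only [hshift, tsum_neg, besselJ_eq_tsum]
    simp
  · simpa only [hshift] using
      (summable_mul_pow (summable_abs_besselJCoeff_mul_pow 1) (k := 1) (fun m => le_rfl) _).neg

theorem pow_mul_tsum_mul_half_pow (n : ℕ) (c : ℕ → ℝ) (q : ℕ → ℕ) (y : ℝ) :
    y ^ n * ∑' m, c m * (y / 2) ^ q m = ∑' m, 2 ^ n * c m * (y / 2) ^ (q m + n) := by
  rw [← tsum_mul_left]
  refine tsum_congr fun m => ?_
  rw [pow_add, div_pow y 2 n]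
  field_simp

theorem hasDerivAt_pow_mul_besselJ_succ (i : ℕ) (x : ℝ) :
    HasDerivAt (fun y => y ^ (i + 1) * besselJ (i + 1) y) (x ^ (i + 1) * besselJ i x) x := by
  have hc (R : ℝ) (hR : 0 ≤ R) :
      Summable fun m => |2 ^ (i + 1) * besselJCoeff (i + 1) m| * R ^ m := by
    simpa [abs_mul, mul_assoc] using
      (summable_abs_besselJCoeff_mul_pow (i + 1) R hR).mul_left (2 ^ (i + 1))
  have h := hasDerivAt_tsum_mul_half_pow hc (q := fun m => 2 * m + (i + 1) + (i + 1))
    (k := 2 * i + 2) (fun m => by omega) x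
  simp only [← pow_mul_tsum_mul_half_pow, ← besselJ_eq_tsum] at h
  refine h.congr_deriv ?_
  rw [besselJ_eq_tsum, pow_mul_tsum_mul_half_pow]
  refine tsum_congr fun m => ?_
  have h := besselJCoeff_succ_order_mul i m
  rw [show 2 * m + (i + 1) + (i + 1) - 1 = 2 * m + i + (i + 1) by omega]
  push_cast at h ⊢
  linear_combination 2 ^ (i + 1) * (x / 2) ^ (2 * m + i + (i + 1)) * h

theorem hasDerivAt_struveH_zero (x : ℝ) : HasDerivAt (struveH 0) (2 / π - struveH 1 x) x := by
  have h := hasDerivAt_tsum_mul_half_pow (summable_abs_struveHCoeff_mul_pow 0)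
    (q := fun m => 2 * m + 0 + 1) (k := 1) (fun m => le_rfl) x
  rw [← funext (struveH_eq_tsum 0)] at h
  refine h.congr_deriv ?_
  have hzero : struveHCoeff 0 0 * ((2 * 0 + 0 + 1 : ℕ) : ℝ) / 2 * (x / 2) ^ (2 * 0 + 0 + 1 - 1)
      = 2 / π := by
    have hπ : √π ^ 2 = π := Real.sq_sqrt Real.pi_pos.le
    simp only [struveHCoeff, Nat.cast_zero, zero_add, Gamma_three_halves]
    field_simp
    norm_num [hπ]
  have hshift : ∀ m : ℕ, struveHCoeff 0 (m + 1) * ((2 * (m + 1) + 0 + 1 : ℕ) : ℝ) / 2 *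
      (x / 2) ^ (2 * (m + 1) + 0 + 1 - 1) = -(struveHCoeff 1 m * (x / 2) ^ (2 * m + 1 + 1)) := by
    intro m
    have h := struveHCoeff_succ_mul 0 m
    rw [show 2 * (m + 1) + 0 + 1 - 1 = 2 * m + 1 + 1 by omega]
    push_cast at h ⊢
    linear_combination (x / 2) ^ (2 * m + 1 + 1) * h
  rw [tsum_eq_zero_add' ?_]
  · simp only [hzero, hshift, tsum_neg, struveH_eq_tsum, sub_eq_add_neg]
  · simpa only [hshift] using
      (summable_mul_pow (summable_abs_struveHCoeff_mul_pow 1) (k := 2) (fun m => le_rfl) _).neg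

theorem hasDerivAt_pow_mul_struveH_succ (i : ℕ) (x : ℝ) :
    HasDerivAt (fun y => y ^ (i + 1) * struveH (i + 1) y) (x ^ (i + 1) * struveH i x) x := by
  have hc (R : ℝ) (hR : 0 ≤ R) :
      Summable fun m => |2 ^ (i + 1) * struveHCoeff (i + 1) m| * R ^ m := by
    simpa [abs_mul, mul_assoc] using
      (summable_abs_struveHCoeff_mul_pow (i + 1) R hR).mul_left (2 ^ (i + 1))
  have h := hasDerivAt_tsum_mul_half_pow hc (q := fun m => 2 * m + (i + 1) + 1 + (i + 1))
    (k := 2 * i + 3) (fun m => by omega) x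
  simp only [← pow_mul_tsum_mul_half_pow, ← struveH_eq_tsum] at h
  refine h.congr_deriv ?_
  rw [struveH_eq_tsum, pow_mul_tsum_mul_half_pow]
  refine tsum_congr fun m => ?_
  have h := struveHCoeff_succ_order_mul i m
  rw [show 2 * m + (i + 1) + 1 + (i + 1) - 1 = 2 * m + i + 1 + (i + 1) by omega]
  push_cast at h ⊢
  linear_combination 2 ^ (i + 1) * (x / 2) ^ (2 * m + i + 1 + (i + 1)) * h

/-- The primitive `x ↦ ∫₀ˣ t J₁(t) dt`, as a power series. -/
noncomputable def integralMulBesselJOne (x : ℝ) : ℝ :=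
  ∑' m, 4 * besselJCoeff 1 m / (2 * m + 3) * (x / 2) ^ (2 * m + 3)

theorem integralMulBesselJOne_zero : integralMulBesselJOne 0 = 0 := by
  simp [integralMulBesselJOne]

theorem abs_four_mul_besselJCoeff_one_div_le (m : ℕ) :
    |4 * besselJCoeff 1 m / (2 * m + 3)| ≤ 4 / m ! := by
  rw [abs_div, abs_mul, abs_of_pos (by positivity : (0 : ℝ) < 2 * m + 3), abs_of_pos four_pos,
    div_le_iff₀ (by positivity)]
  calc 4 * |besselJCoeff 1 m| ≤ 4 * (1 / m !) := by gcongr; exact abs_besselJCoeff_le 1 m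
    _ ≤ 4 / m ! * (2 * m + 3) := by
      rw [mul_one_div]
      exact le_mul_of_one_le_right (by positivity) (by linarith [(m.cast_nonneg : (0:ℝ) ≤ m)])

theorem hasDerivAt_integralMulBesselJOne (x : ℝ) :
    HasDerivAt integralMulBesselJOne (x * besselJ 1 x) x := by
  have h := hasDerivAt_tsum_mul_half_pow
    (summable_abs_mul_pow_of_abs_le_div_factorial abs_four_mul_besselJCoeff_one_div_le)
    (q := fun m => 2 * m + 3) (k := 3) (fun m => le_rfl) x
  refine h.congr_deriv ?_
  have e := pow_mul_tsum_mul_half_pow 1 (besselJCoeff 1) (fun m => 2 * m + 1) x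
  rw [pow_one] at e
  rw [besselJ_eq_tsum, e]
  refine tsum_congr fun m => ?_
  rw [show 2 * m + 3 - 1 = 2 * m + 1 + 1 by omega]
  push_cast
  field_simp
  ring

theorem mul_besselJ_struveH_sub (x : ℝ) :
    x * (besselJ 1 x * struveH 0 x - besselJ 0 x * struveH 1 x) =
      2 / π * integralMulBesselJOne x := by
  set F : ℝ → ℝ := fun y => y * besselJ 1 y * struveH 0 y - besselJ 0 y * (y * struveH 1 y) -
    2 / π * integralMulBesselJOne y
  have hF (y : ℝ) : HasDerivAt F 0 y := by
    have hJ := hasDerivAt_pow_mul_besselJ_succ 0 y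
    have hH := hasDerivAt_pow_mul_struveH_succ 0 y
    simp only [zero_add, pow_one] at hJ hH
    have h := ((hJ.mul (hasDerivAt_struveH_zero y)).sub
      ((hasDerivAt_besselJ_zero y).mul hH)).sub
      ((hasDerivAt_integralMulBesselJOne y).const_mul (2 / π))
    exact h.congr_deriv (by ring)
  have hconst := is_const_of_deriv_eq_zero (fun y => (hF y).differentiableAt)
    (fun y => (hF y).deriv) x 0
  simp only [F, integralMulBesselJOne_zero] at hconst
  linear_combination hconst

open Set

noncomputable def potRadial (R ℓ r : ℝ) : ℝ :=
  if r < R then (r - ℓ) ^ 2 - (R - ℓ) ^ 2 else 0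

section Potential

variable {L R ℓ : ℝ}

theorem potV2_eq_potRadial (x : ℝ × ℝ) :
    potV2 R ℓ x = potRadial R ℓ √(x.1 ^ 2 + x.2 ^ 2) :=
  rfl

theorem measurable_potRadial : Measurable (potRadial R ℓ) :=
  Measurable.ite measurableSet_Iio (by fun_prop) measurable_const

theorem measurable_potV2 : Measurable (potV2 R ℓ) :=
  measurable_potRadial.comp (by fun_prop)

theorem abs_potRadial_le {r : ℝ} (hr : 0 ≤ r) : |potRadial R ℓ r| ≤ (|R| + |ℓ|) ^ 2 := by
  unfold potRadial
  split_ifs with h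
  · have ha : (r - ℓ) ^ 2 ≤ (|R| + |ℓ|) ^ 2 := by
      rw [← sq_abs]
      refine pow_le_pow_left₀ (abs_nonneg _) ((abs_sub _ _).trans ?_) 2
      gcongr
    have hb : (R - ℓ) ^ 2 ≤ (|R| + |ℓ|) ^ 2 := by
      rw [← sq_abs]
      exact pow_le_pow_left₀ (abs_nonneg _) (abs_sub _ _) 2
    rw [abs_le]
    constructor <;> nlinarith [sq_nonneg (r - ℓ), sq_nonneg (R - ℓ)]
  · rw [abs_zero]
    positivity

theorem potV2_eq_zero_of_notMem (hRL : R ≤ L) {x : ℝ × ℝ}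
    (hx : x ∉ Icc (-L) L ×ˢ Icc (-L) L) : potV2 R ℓ x = 0 := by
  rw [Set.mem_prod, Set.mem_Icc, Set.mem_Icc, ← abs_le, ← abs_le, not_and_or, not_le,
    not_le] at hx
  rw [potV2_eq_potRadial, potRadial, if_neg (not_lt.mpr _)]
  rcases hx with h | h
  · exact hRL.trans (h.le.trans (Real.abs_le_sqrt (by nlinarith)))
  · exact hRL.trans (h.le.trans (Real.abs_le_sqrt (by nlinarith)))

theorem re_Vhat2C_one_zero (hRL : R ≤ L) :
    (Vhat2C L R ℓ 1 0).re =
      (1 / (2 * L)) ^ 2 * ∫ x, potV2 R ℓ x * cos (π / L * x.1) := by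
  rw [Vhat2C, show (1 / (2 * (L : ℂ))) ^ 2 = (((1 / (2 * L)) ^ 2 : ℝ) : ℂ) by push_cast; rfl,
    Complex.re_ofReal_mul]
  set E : ℝ × ℝ → ℂ := fun x => (potV2 R ℓ x : ℂ) *
    Complex.exp (-(Complex.I * π * (((1 : ℤ) : ℂ) * x.1 + ((0 : ℤ) : ℂ) * x.2) / L))
  have hexp (x : ℝ × ℝ) :
      E x = potV2 R ℓ x * Complex.exp ((-(π / L * x.1) : ℝ) * Complex.I) := by
    simp only [E]
    push_cast
    ring_nf
  have hint : IntegrableOn E (Icc (-L) L ×ˢ Icc (-L) L) := by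
    refine Measure.integrableOn_of_bounded (M := (|R| + |ℓ|) ^ 2)
      (isCompact_Icc.prod isCompact_Icc).measure_lt_top.ne
      ((Complex.measurable_ofReal.comp measurable_potV2).mul
        (by fun_prop : Continuous _).measurable).aestronglyMeasurable (ae_of_all _ fun x => ?_)
    rw [hexp, norm_mul, Complex.norm_exp_ofReal_mul_I, mul_one, Complex.norm_real,
      Real.norm_eq_abs, potV2_eq_potRadial]
    exact abs_potRadial_le (Real.sqrt_nonneg _)
  have hre (x : ℝ × ℝ) : (E x).re = potV2 R ℓ x * cos (π / L * x.1) := by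
    rw [hexp, Complex.re_ofReal_mul, Complex.exp_ofReal_mul_I_re, Real.cos_neg]
  rw [show (∫ x in Icc (-L) L ×ˢ Icc (-L) L, E x).re =
      ∫ x in Icc (-L) L ×ˢ Icc (-L) L, (E x).re from (integral_re hint).symm]
  simp only [hre]
  rw [setIntegral_eq_integral_of_forall_compl_eq_zero fun x hx => by
    rw [potV2_eq_zero_of_notMem hRL hx, zero_mul]]

end Potential

theorem integral_comp_sqrt_eq_setIntegral_polar {R : ℝ} (f : ℝ → ℝ)
    (hf : ∀ r, R ≤ r → f r = 0) (h : ℝ × ℝ → ℝ) :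
    ∫ x, f √(x.1 ^ 2 + x.2 ^ 2) * h x =
      ∫ p in Ioo 0 R ×ˢ Ioo (-π) π, p.1 * (f p.1 * h (p.1 * cos p.2, p.1 * sin p.2)) := by
  rw [← integral_comp_polarCoord_symm, show polarCoord.target = Ioi 0 ×ˢ Ioo (-π) π from rfl]
  calc _ = ∫ p in Ioi 0 ×ˢ Ioo (-π) π,
        p.1 * (f p.1 * h (p.1 * cos p.2, p.1 * sin p.2)) := by
        refine setIntegral_congr_fun (measurableSet_Ioi.prod measurableSet_Ioo) fun p hp => ?_
        have hsq : (p.1 * cos p.2) ^ 2 + (p.1 * sin p.2) ^ 2 = p.1 ^ 2 := by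
          linear_combination p.1 ^ 2 * Real.cos_sq_add_sin_sq p.2
        simp [hsq, Real.sqrt_sq (le_of_lt hp.1)]
    _ = _ := setIntegral_eq_of_subset_of_forall_sdiff_eq_zero
        (measurableSet_Ioi.prod measurableSet_Ioo)
        (Set.prod_mono Set.Ioo_subset_Ioi_self subset_rfl) fun p hp => by
          have hR : R ≤ p.1 := not_lt.mp fun h => hp.2 ⟨⟨hp.1.1, h⟩, hp.1.2⟩
          rw [hf _ hR, zero_mul, mul_zero]

theorem hasSum_setIntegral_polar_mul_cos {R B : ℝ} (f : ℝ → ℝ) (hfm : Measurable f)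
    (hf : ∀ r ∈ Ioo 0 R, |f r| ≤ B) (k : ℝ) :
    HasSum (fun m => (-1) ^ m * k ^ (2 * m) / (2 * m)! *
        ((∫ r in Ioo 0 R, f r * r ^ (2 * m + 1)) * ∫ θ in Ioo (-π) π, cos θ ^ (2 * m)))
      (∫ p in Ioo 0 R ×ˢ Ioo (-π) π, p.1 * (f p.1 * cos (k * (p.1 * cos p.2)))) := by
  have hs : MeasurableSet (Ioo 0 R ×ˢ Ioo (-π) π) := measurableSet_Ioo.prod measurableSet_Ioo
  have : IsFiniteMeasure (volume.restrict (Ioo 0 R ×ˢ Ioo (-π) π)) :=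
    isFiniteMeasure_restrict.mpr (Bornology.IsBounded.measure_lt_top
      (Metric.isBounded_Ioo _ _ |>.prod (Metric.isBounded_Ioo _ _))).ne
  set F : ℕ → ℝ × ℝ → ℝ := fun m p =>
    (-1) ^ m * k ^ (2 * m) / (2 * m)! * (f p.1 * p.1 ^ (2 * m + 1)) * cos p.2 ^ (2 * m)
  have hF (m : ℕ) : ∫ p in Ioo 0 R ×ˢ Ioo (-π) π, F m p =
      (-1) ^ m * k ^ (2 * m) / (2 * m)! *
      ((∫ r in Ioo 0 R, f r * r ^ (2 * m + 1)) * ∫ θ in Ioo (-π) π, cos θ ^ (2 * m)) := by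
    simp only [F]
    rw [Measure.volume_eq_prod, setIntegral_prod_mul (fun r => (-1) ^ m * k ^ (2 * m) / (2 * m)! *
      (f r * r ^ (2 * m + 1))) (fun θ => cos θ ^ (2 * m)), integral_const_mul, mul_assoc]
  have hbound (m : ℕ) : ∀ᵐ p ∂volume.restrict (Ioo 0 R ×ˢ Ioo (-π) π), ‖F m p‖ ≤
      B * R * ((|k| * R) ^ (2 * m) / (2 * m)!) := by
    refine (ae_restrict_iff' hs).mpr (ae_of_all _ fun p hp => ?_)
    have hr : 0 < p.1 := hp.1.1
    have hfp := hf p.1 hp.1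
    have hB : 0 ≤ B := (abs_nonneg _).trans hfp
    have hpow : p.1 ^ (2 * m + 1) ≤ R ^ (2 * m + 1) := pow_le_pow_left₀ hr.le hp.1.2.le _
    have hcos : |cos p.2| ^ (2 * m) ≤ 1 := pow_le_one₀ (abs_nonneg _) (Real.abs_cos_le_one _)
    simp only [F, Real.norm_eq_abs, abs_mul, abs_div, abs_pow, abs_neg, abs_one, one_pow, one_mul,
      Nat.abs_cast, abs_of_pos hr]
    calc |k| ^ (2 * m) / (2 * m)! * (|f p.1| * p.1 ^ (2 * m + 1)) * |cos p.2| ^ (2 * m)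
        ≤ |k| ^ (2 * m) / (2 * m)! * (B * R ^ (2 * m + 1)) * 1 := by
          gcongr
          exact mul_nonneg (by positivity) (mul_nonneg hB (pow_nonneg (hr.trans hp.1.2).le _))
      _ = B * R * ((|k| * R) ^ (2 * m) / (2 * m)!) := by ring
  have hlim (p : ℝ × ℝ) :
      HasSum (fun m => F m p) (p.1 * (f p.1 * cos (k * (p.1 * cos p.2)))) := by
    have e : (fun m => F m p) = fun m =>
        p.1 * f p.1 * ((-1) ^ m * (k * (p.1 * cos p.2)) ^ (2 * m) / (2 * m)!) :=
      funext fun m => by simp only [F]; ring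
    rw [e, ← mul_assoc (p.1) (f p.1)]
    exact (Real.hasSum_cos _).mul_left _
  have hsum := hasSum_integral_of_dominated_convergence (F := F)
    (fun m _ => B * R * ((|k| * R) ^ (2 * m) / (2 * m)!))
    (fun m => (by fun_prop : Measurable (F m)).aestronglyMeasurable) hbound
    (ae_of_all _ fun _ => (Real.hasSum_cosh (|k| * R)).summable.mul_left _) (integrable_const _)
    (ae_of_all _ hlim)
  simpa only [hF] using hsum

theorem integral_cos_pow_two_mul (m : ℕ) :
    ∫ θ in (-π)..π, cos θ ^ (2 * m) = 2 * π * (2 * m)! / (4 ^ m * (m ! : ℝ) ^ 2) := by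
  induction m with
  | zero => simp; ring
  | succ m ih =>
    rw [show 2 * (m + 1) = 2 * m + 2 by ring, integral_cos_pow, ih, Real.sin_pi, Real.sin_neg,
      Real.sin_pi, Nat.factorial_succ, show 2 * m + 2 = (2 * m + 1) + 1 by ring,
      Nat.factorial_succ, Nat.factorial_succ]
    push_cast
    field_simp
    ring

theorem setIntegral_Ioo_cos_pow_two_mul (m : ℕ) :
    ∫ θ in Ioo (-π) π, cos θ ^ (2 * m) = 2 * π * (2 * m)! / (4 ^ m * (m ! : ℝ) ^ 2) := by
  rw [← integral_Ioc_eq_integral_Ioo,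
    ← intervalIntegral.integral_of_le (by linarith [Real.pi_pos]), integral_cos_pow_two_mul]

theorem setIntegral_potRadial_mul_pow {R : ℝ} (ℓ : ℝ) (hR : 0 ≤ R) (m : ℕ) :
    ∫ r in Ioo 0 R, potRadial R ℓ r * r ^ (2 * m + 1) =
      R ^ (2 * m + 4) / (2 * m + 4) - 2 * ℓ * R ^ (2 * m + 3) / (2 * m + 3) +
        (2 * ℓ * R - R ^ 2) * R ^ (2 * m + 2) / (2 * m + 2) := by
  have hpoly : ∀ r ∈ Ioo 0 R, potRadial R ℓ r * r ^ (2 * m + 1) =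
      r ^ (2 * m + 3) - 2 * ℓ * r ^ (2 * m + 2) + (2 * ℓ * R - R ^ 2) * r ^ (2 * m + 1) := by
    intro r hr
    rw [potRadial, if_pos hr.2]
    ring
  rw [setIntegral_congr_fun measurableSet_Ioo hpoly, ← integral_Ioc_eq_integral_Ioo,
    ← intervalIntegral.integral_of_le hR, intervalIntegral.integral_add,
    intervalIntegral.integral_sub, intervalIntegral.integral_const_mul,
    intervalIntegral.integral_const_mul, integral_pow, integral_pow, integral_pow]
  · push_cast
    ring
  all_goals exact Continuous.intervalIntegrable (by fun_prop) _ _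

theorem hasSum_pi_mul_re_Vhat2C_one_zero {L R : ℝ} (ℓ : ℝ) (hL : 0 < L) (hR : 0 < R)
    (hRL : R ≤ L) :
    HasSum (fun m => -R ^ 2 * (besselJCoeff 2 m * (π * R / L / 2) ^ (2 * m + 2)) +
        ℓ * L / π * (4 * besselJCoeff 1 m / (2 * m + 3) * (π * R / L / 2) ^ (2 * m + 3)))
      (π * (Vhat2C L R ℓ 1 0).re) := by
  have h := hasSum_setIntegral_polar_mul_cos (R := R) (potRadial R ℓ) measurable_potRadial
    (fun r hr => abs_potRadial_le hr.1.le) (π / L)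
  simp only [setIntegral_potRadial_mul_pow ℓ hR.le, setIntegral_Ioo_cos_pow_two_mul] at h
  rw [re_Vhat2C_one_zero hRL, funext potV2_eq_potRadial,
    integral_comp_sqrt_eq_setIntegral_polar (potRadial R ℓ) (fun r hr => if_neg (not_lt.mpr hr))]
  refine ((h.mul_left _).mul_left π).congr_fun fun m => ?_
  have h4 : (4 : ℝ) ^ m = 2 ^ (2 * m) := by rw [pow_mul]; norm_num
  simp only [besselJCoeff, Nat.factorial_succ, div_pow, mul_pow, h4]
  push_cast
  field_simp
  ring

theorem pi_mul_re_Vhat2C_one_zero {L R : ℝ} (ℓ : ℝ) (hL : 0 < L) (hR : 0 < R)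
    (hRL : R ≤ L) :
    π * (Vhat2C L R ℓ 1 0).re = R ^ 2 * ((π / 2) * (ℓ / R) *
      (besselJ 1 (π * R / L) * struveH 0 (π * R / L) -
        besselJ 0 (π * R / L) * struveH 1 (π * R / L)) - besselJ 2 (π * R / L)) := by
  have hV := hasSum_pi_mul_re_Vhat2C_one_zero ℓ hL hR hRL
  generalize hz_def : π * R / L = z at hV ⊢
  have hJ2 : HasSum (fun m => besselJCoeff 2 m * (z / 2) ^ (2 * m + 2)) (besselJ 2 z) := by
    rw [besselJ_eq_tsum]
    exact (summable_mul_pow (summable_abs_besselJCoeff_mul_pow 2) (k := 2) (fun m => le_rfl)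
      (z / 2)).hasSum
  have hT : HasSum (fun m => 4 * besselJCoeff 1 m / (2 * m + 3) * (z / 2) ^ (2 * m + 3))
      (integralMulBesselJOne z) :=
    (summable_mul_pow (summable_abs_mul_pow_of_abs_le_div_factorial
      abs_four_mul_besselJCoeff_one_div_le) (k := 3) (fun m => le_rfl) (z / 2)).hasSum
  have hX : integralMulBesselJOne z =
      π / 2 * z * (besselJ 1 z * struveH 0 z - besselJ 0 z * struveH 1 z) := by
    rw [mul_assoc, mul_besselJ_struveH_sub]
    field_simp
  rw [hV.unique ((hJ2.mul_left (-R ^ 2)).add (hT.mul_left (ℓ * L / π))), hX, ← hz_def]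
  field_simp
  ring

theorem instability_threshold_2D_general (L R ℓ D : ℝ) (hL : 0 < L) (hR : 0 < R) (hRL : R ≤ L) :
    letI z : ℝ := π * R / L
    π * (D + (Vhat2C L R ℓ 1 0).re) =
        D * π + R ^ 2 *
          ((π / 2) * (ℓ / R) *
              (besselJ 1 z * struveH 0 z - besselJ 0 z * struveH 1 z) -
            besselJ 2 z) ∧
      (D + (Vhat2C L R ℓ 1 0).re = 0 ↔
        D * π + R ^ 2 *
          ((π / 2) * (ℓ / R) *
              (besselJ 1 z * struveH 0 z - besselJ 0 z * struveH 1 z) -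
            besselJ 2 z) = 0) := by
  have key : π * (D + (Vhat2C L R ℓ 1 0).re) = D * π + π * (Vhat2C L R ℓ 1 0).re := by ring
  rw [pi_mul_re_Vhat2C_one_zero ℓ hL hR hRL] at key
  exact ⟨key, by rw [← key, mul_eq_zero, or_iff_right Real.pi_ne_zero]⟩

theorem instability_threshold_2D (L R ℓ D : ℝ) (hL : 0 < L) (hR : 0 < R) (hRL : R ≤ L)
    (hℓ : 0 ≤ ℓ) (hD : 0 < D) :
    letI z : ℝ := π * R / L
    π * (D + (Vhat2C L R ℓ 1 0).re) =
        D * π + R ^ 2 *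
          ((π / 2) * (ℓ / R) *
              (besselJ 1 z * struveH 0 z - besselJ 0 z * struveH 1 z) -
            besselJ 2 z) ∧
      (D + (Vhat2C L R ℓ 1 0).re = 0 ↔
        D * π + R ^ 2 *
          ((π / 2) * (ℓ / R) *
              (besselJ 1 z * struveH 0 z - besselJ 0 z * struveH 1 z) -
            besselJ 2 z) = 0) :=
  instability_threshold_2D_general L R ℓ D hL hR hRL
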